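/- arXiv:2205.03487 — 4 statements merged into one kernel-verified Lean document; each statement's English description precedes it below -/
import Mathlib

section
/- Let D=(E,𝓕) be a connected odd normal binary delta-matroid. Then the twist polynomial of D is a monomial (i.e., there exists k with w(D*A)=k for all A⊆E) if and only if E is a single element e and 𝓕={∅,{e}}. -/
open Finset
open scoped symmDiff

noncomputable section

namespace DeltaMatroid

variable {α : Type*} [DecidableEq α]

/-- A delta-matroid on ground set `E` with feasible sets `F`: `F` is nonempty, consists of
subsets of `E`, and satisfies the symmetric exchange axiom. -/
def IsDeltaMatroid (E : Finset α) (F : Finset (Finset α)) : Prop :=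
  F.Nonempty ∧ (∀ X ∈ F, X ⊆ E) ∧
    ∀ X ∈ F, ∀ Y ∈ F, ∀ u ∈ X ∆ Y, ∃ v ∈ X ∆ Y, X ∆ ({u, v} : Finset α) ∈ F

/-- The twist `D * A` of the feasible sets by a subset `A`. -/
def twist (F : Finset (Finset α)) (A : Finset α) : Finset (Finset α) :=
  F.image fun X => A ∆ X

/-- Maximum cardinality of a feasible set. -/
def maxCard (F : Finset (Finset α)) : ℕ := F.sup Finset.card

/-- Minimum cardinality of a feasible set. -/
def minCard (F : Finset (Finset α)) : ℕ := sInf (Finset.card '' (F : Set (Finset α)))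

/-- The width `w(D)`. -/
def width (F : Finset (Finset α)) : ℕ := maxCard F - minCard F

/-- Feasible sets of minimum cardinality. -/
def Fmin (F : Finset (Finset α)) : Finset (Finset α) := F.filter fun X => X.card = minCard F

/-- Feasible sets of maximum cardinality. -/
def Fmax (F : Finset (Finset α)) : Finset (Finset α) := F.filter fun X => X.card = maxCard F

/-- `e` is a ribbon loop: it lies in no minimum-cardinality feasible set. -/
def IsRibbonLoop (F : Finset (Finset α)) (e : α) : Prop := ∀ X ∈ Fmin F, e ∉ X

/-- A ribbon loop is non-orientable if it is also a ribbon loop of `D * e`. -/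
def IsNonorientableRibbonLoop (F : Finset (Finset α)) (e : α) : Prop :=
  IsRibbonLoop F e ∧ IsRibbonLoop (twist F {e}) e

/-- A ribbon loop is orientable if it is not a ribbon loop of `D * e`. -/
def IsOrientableRibbonLoop (F : Finset (Finset α)) (e : α) : Prop :=
  IsRibbonLoop F e ∧ ¬ IsRibbonLoop (twist F {e}) e

/-- `e` is a loop: it lies in no feasible set. -/
def IsLoop (F : Finset (Finset α)) (e : α) : Prop := ∀ X ∈ F, e ∉ X

/-- `e` is a coloop: it lies in every feasible set. -/
def IsColoop (F : Finset (Finset α)) (e : α) : Prop := ∀ X ∈ F, e ∈ X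

/-- Contraction `D / e`. -/
def contract (F : Finset (Finset α)) (e : α) : Finset (Finset α) :=
  if ∀ X ∈ F, e ∉ X then F
  else (F.filter fun X => e ∈ X).image fun X => X.erase e

/-- Deletion `D \ e`. -/
def delete (F : Finset (Finset α)) (e : α) : Finset (Finset α) :=
  if ∀ X ∈ F, e ∈ X then F.image fun X => X.erase e
  else F.filter fun X => e ∉ X

/-- Deletion of every element of `A` (in some order; the order does not matter). -/
def deleteSet (F : Finset (Finset α)) (A : Finset α) : Finset (Finset α) :=
  A.toList.foldl delete F

/-- The restriction `D |_A = D \ (E \ A)` of a delta-matroid with ground set `E`. -/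
def restrict (F : Finset (Finset α)) (E A : Finset α) : Finset (Finset α) :=
  deleteSet F (E \ A)

/-- Feasible sets of the direct sum `D ⊕ D'`. -/
def directSum (F G : Finset (Finset α)) : Finset (Finset α) :=
  (F ×ˢ G).image fun p => p.1 ∪ p.2

/-- A delta-matroid is connected if it is not a direct sum of two delta-matroids on
nonempty ground sets. -/
def IsConnected (E : Finset α) (F : Finset (Finset α)) : Prop :=
  ¬ ∃ (E₁ E₂ : Finset α) (F₁ F₂ : Finset (Finset α)),
      E₁.Nonempty ∧ E₂.Nonempty ∧ Disjoint E₁ E₂ ∧ E = E₁ ∪ E₂ ∧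
      IsDeltaMatroid E₁ F₁ ∧ IsDeltaMatroid E₂ F₂ ∧ F = directSum F₁ F₂

/-- A delta-matroid is even if all feasible sets have the same parity of cardinality. -/
def IsEvenDM (F : Finset (Finset α)) : Prop :=
  ∀ X ∈ F, ∀ Y ∈ F, X.card % 2 = Y.card % 2

variable {ι : Type*} [Fintype ι] [DecidableEq ι]

/-- The feasible sets of `D(C)`: subsets `A` whose principal submatrix `C[A]` is nonsingular
(over `GF(2)`, i.e. has nonzero determinant); `C[∅]` is nonsingular by convention. -/
def binaryFeasible (C : Matrix ι ι (ZMod 2)) : Finset (Finset ι) :=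
  Finset.univ.filter fun A =>
    (C.submatrix (fun x : {a // a ∈ A} => (x : ι)) (fun x : {a // a ∈ A} => (x : ι))).det ≠ 0

/-- The (simple-graph part of the) intersection graph `G_D` of a normal binary delta-matroid
`D(C)`: distinct `u, v` adjacent iff `C u v = 1`.  Loops are recorded by the diagonal of `C`. -/
def interGraph (C : Matrix ι ι (ZMod 2)) : SimpleGraph ι :=
  SimpleGraph.fromRel fun u v => C u v = 1

/-!
If `D(C)` is odd then `C e e = 1` for some `e`, since a symmetric `GF(2)`-matrix with zero diagonal
has no nonsingular principal submatrix of odd size. If `e` has no neighbour, then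
`D(C) = {∅, {e}} ⊕ (D(C) \ e)`, and connectivity forces `E = {e}`.

Otherwise let `f` be a neighbour of `e`. If `C f f = 1`, the sets `∅, {e}, {f}` are feasible and
`{e, f}` is not. If `C f f = 0`, the same holds for `D(C) * {e}`, which is again binary by principal
pivoting and has the same twists. Such a configuration rules out a constant width `r`. Twisting by
a feasible `{x}` keeps `∅` feasible, so every feasible set of size `r` contains `e` and `f`.
Twisting by `{e, f}` raises the minimum size to `1`, which yields a feasible `X` of size `r - 1`
disjoint from `{e, f}`. In a binary delta-matroid every feasible set that is not of maximum size lies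
in a strictly larger feasible set (after pivoting on it, the pivoted matrix would otherwise vanish
outside it), but a feasible superset of `X` of size `r` has only one element outside `X`, so it
cannot contain both `e` and `f`.
-/

section MatrixLemmas

open Matrix

variable {n R : Type*} [DecidableEq n] [CommRing R]

def _root_.Matrix.columnMix (C : Matrix n n R) (A : Finset n) : Matrix n n R :=
  of fun i j => if j ∈ A then C i j else (1 : Matrix n n R) i j

theorem _root_.Matrix.columnMix_insert {C : Matrix n n R} {e : n}
    (hcol : ∀ i, C i e = (1 : Matrix n n R) i e) (A : Finset n) :
    C.columnMix (insert e A) = C.columnMix A := by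
  ext i j
  by_cases hj : j = e
  · subst hj
    simp [columnMix, hcol]
  · simp [columnMix, hj]

lemma _root_.Matrix.diagonal_indicator_symmDiff [CharP R 2] (A B : Finset n) :
    diagonal (fun i => if i ∈ A ∆ B then (1 : R) else 0) =
      diagonal (fun i => if i ∈ A then 1 else 0) + diagonal (fun i => if i ∈ B then 1 else 0) := by
  rw [diagonal_add]
  congr 1
  ext i
  by_cases hA : i ∈ A <;> by_cases hB : i ∈ B <;>
    simp [mem_symmDiff, hA, hB, CharTwo.add_self_eq_zero]

variable [Fintype n]

theorem _root_.Matrix.columnMix_eq_sub_one_mul_diagonal_add_one (C : Matrix n n R)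
    (A : Finset n) :
    C.columnMix A = (C - 1) * diagonal (fun i => if i ∈ A then 1 else 0) + 1 := by
  ext i j
  by_cases hj : j ∈ A <;> simp [columnMix, hj]

theorem _root_.Matrix.det_columnMix (C : Matrix n n R) (A : Finset n) :
    (columnMix C A).det = (C.submatrix ((↑) : A → n) (↑)).det := by
  let e : A ⊕ {j // j ∉ A} ≃ n := Equiv.sumCompl (· ∈ A)
  have hblock : (columnMix C A).submatrix e e =
      fromBlocks (C.submatrix (↑) (↑)) 0 (of fun (i : {j // j ∉ A}) (j : A) => C i j) 1 := by
    ext (i | i) (j | j) <;> simp [columnMix, e, j.2, one_apply, Subtype.ext_iff]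
    exact fun h => (j.2 (h ▸ i.2)).elim
  rw [← det_submatrix_equiv_self e, hblock, det_fromBlocks_zero₁₂, det_one, mul_one]

theorem _root_.Matrix.det_eq_zero_of_zero_block (M : Matrix n n R) (T : Finset n)
    (hT : ∀ i ∈ T, ∀ j ∈ T, M i j = 0) (hcard : Fintype.card n < 2 * #T) : M.det = 0 := by
  refine (det_apply M).trans (sum_eq_zero fun σ _ => ?_)
  obtain ⟨i, hi, hσi⟩ : ∃ i ∈ T, σ i ∈ T := by
    by_contra! h
    have hdisj : Disjoint (T.map σ.toEmbedding) T :=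
      disjoint_left.2 fun _ ha => by
        obtain ⟨i, hi, rfl⟩ := mem_map.1 ha
        exact h i hi
    have := card_le_univ (T.map σ.toEmbedding ∪ T)
    rw [card_union_of_disjoint hdisj, card_map] at this
    omega
  rw [prod_eq_zero (f := fun j => M (σ j) j) (mem_univ i) (hT _ hσi _ hi), smul_zero]

theorem _root_.Matrix.det_eq_zero_of_isSymm_of_diag_eq_zero [CharP R 2] {M : Matrix n n R}
    (hM : M.IsSymm) (hdiag : ∀ i, M i i = 0) (hodd : Odd (Fintype.card n)) : M.det = 0 := by
  have hterm : ∀ σ : Equiv.Perm n, ∏ i, M (σ⁻¹ i) i = ∏ i, M (σ i) i := fun σ => by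
    rw [← Equiv.prod_comp σ]
    simp only [Equiv.Perm.coe_inv, Equiv.symm_apply_apply]
    exact prod_congr rfl fun i _ => hM.apply (σ i) i
  -- the terms of `σ` and `σ⁻¹` cancel in characteristic 2, and an involution of an odd set
  -- has a fixed point, where it meets the zero diagonal
  refine (det_apply M).trans (sum_ninvolution (fun σ => σ⁻¹) (fun σ => ?_) (fun σ hσ => ?_)
    (fun _ => mem_univ _) inv_inv)
  · rw [Equiv.Perm.sign_inv, hterm, CharTwo.add_self_eq_zero]
  · rintro (hinv : σ⁻¹ = σ)
    have hσ2 : σ ^ 2 ^ 1 = 1 := by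
      rw [pow_one, sq]
      nth_rw 1 [← hinv]
      exact inv_mul_cancel σ
    obtain ⟨i, hi⟩ := Equiv.Perm.exists_fixed_point_of_prime (p := 2)
      (by rwa [← even_iff_two_dvd, Nat.not_even_iff_odd]) hσ2
    exact hσ (by rw [prod_eq_zero (mem_univ i) (by rw [hi, hdiag]), smul_zero])

end MatrixLemmas

section SetSystem

lemma minCard_le {α : Type*} {F : Finset (Finset α)} {X : Finset α} (h : X ∈ F) : minCard F ≤ #X :=
  Nat.sInf_le ⟨X, h, rfl⟩

lemma minCard_eq_zero {α : Type*} {F : Finset (Finset α)} (h : ∅ ∈ F) : minCard F = 0 :=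
  Nat.eq_zero_of_le_zero (minCard_le h)

lemma exists_card_eq_minCard {α : Type*} {F : Finset (Finset α)} (h : F.Nonempty) :
    ∃ X ∈ F, #X = minCard F := by
  obtain ⟨X, hX, hmin⟩ := Nat.sInf_mem (h.to_set.image card)
  exact ⟨X, hX, hmin⟩

lemma le_maxCard {α : Type*} {F : Finset (Finset α)} {X : Finset α} (h : X ∈ F) : #X ≤ maxCard F :=
  le_sup h

lemma exists_card_eq_maxCard {α : Type*} {F : Finset (Finset α)} (h : F.Nonempty) :
    ∃ X ∈ F, #X = maxCard F := by
  obtain ⟨X, hX, hmax⟩ := exists_mem_eq_sup F h card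
  exact ⟨X, hX, hmax.symm⟩

lemma width_eq_maxCard {α : Type*} {F : Finset (Finset α)} (h : ∅ ∈ F) : width F = maxCard F := by
  rw [width, minCard_eq_zero h, Nat.sub_zero]

lemma mem_twist {F : Finset (Finset α)} {A Z : Finset α} : Z ∈ twist F A ↔ A ∆ Z ∈ F := by
  simp only [twist, mem_image]
  constructor
  · rintro ⟨X, hX, rfl⟩
    rwa [symmDiff_symmDiff_cancel_left]
  · exact fun h => ⟨A ∆ Z, h, symmDiff_symmDiff_cancel_left A Z⟩

lemma twist_twist (F : Finset (Finset α)) (A B : Finset α) :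
    twist (twist F B) A = twist F (B ∆ A) := by
  ext Z
  rw [mem_twist, mem_twist, mem_twist, symmDiff_assoc]

lemma twist_empty (F : Finset (Finset α)) : twist F ∅ = F := by
  ext Z
  rw [mem_twist, ← bot_eq_empty, bot_symmDiff]

lemma width_twist_pair {e : α} {A : Finset α} (hA : A ⊆ {e}) :
    width (twist {∅, {e}} A) = 1 := by
  have hpair : width {∅, {e}} = 1 := by
    rw [width_eq_maxCard (mem_insert_self _ _)]
    simp [maxCard]
  rcases subset_singleton_iff.1 hA with rfl | rfl
  · rwa [twist_empty]
  · simpa [twist, pair_comm, ← bot_eq_empty] using hpair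

lemma _root_.Finset.card_symmDiff (s t : Finset α) : #(s ∆ t) = #(s \ t) + #(t \ s) :=
  card_union_of_disjoint disjoint_sdiff_sdiff

lemma mem_of_card_eq_maxCard {F : Finset (Finset α)} {x : α} {X : Finset α} (h0 : ∅ ∈ F)
    (hx : {x} ∈ F) (hw : width (twist F {x}) = width F) (hX : X ∈ F)
    (hXmax : #X = maxCard F) : x ∈ X := by
  have h0' : ∅ ∈ twist F {x} := by rwa [mem_twist, ← bot_eq_empty, symmDiff_bot]
  rw [width_eq_maxCard h0, width_eq_maxCard h0'] at hw
  by_contra hxX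
  have hmem : insert x X ∈ twist F {x} := by
    rwa [mem_twist, symmDiff_of_le (singleton_subset_iff.2 (mem_insert_self x X)),
      sdiff_singleton_eq_erase, erase_insert hxX]
  have := le_maxCard hmem
  rw [card_insert_of_notMem hxX] at this
  omega

lemma exists_disjoint_card_add_one_eq_maxCard {F : Finset (Finset α)} {e f : α} (hne : e ≠ f)
    (h0 : ∅ ∈ F) (he : {e} ∈ F) (hef : {e, f} ∉ F) (hw : width (twist F {e, f}) = width F) :
    ∃ X ∈ F, Disjoint {e, f} X ∧ #X + 1 = maxCard F := by
  have hfG : {f} ∈ twist F {e, f} := by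
    rwa [mem_twist, symmDiff_of_ge (by simp), insert_sdiff_of_notMem _ (by simpa using hne),
      sdiff_self, bot_eq_empty, insert_empty]
  have hminG : minCard (twist F {e, f}) ≠ 0 := by
    obtain ⟨X, hX, hXc⟩ := exists_card_eq_minCard ⟨_, hfG⟩
    rw [← hXc, Ne, card_eq_zero]
    rintro rfl
    rw [mem_twist, ← bot_eq_empty, symmDiff_bot] at hX
    exact hef hX
  obtain ⟨W, hW, hWc⟩ := exists_card_eq_maxCard ⟨_, hfG⟩
  have hWr : #W = maxCard F + 1 := by
    have h1 := minCard_le hfG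
    have h2 := le_maxCard hfG
    rw [width, width_eq_maxCard h0] at hw
    rw [card_singleton] at h1 h2
    omega
  have hX := mem_twist.1 hW
  set X := {e, f} ∆ W
  have hWX : #({e, f} ∆ X) = #W := by rw [symmDiff_symmDiff_cancel_left]
  have h1 := card_symmDiff {e, f} X
  have h2 := card_sdiff_add_card_inter {e, f} X
  have h3 := card_sdiff_add_card_inter X {e, f}
  have h4 := le_maxCard hX
  rw [inter_comm] at h3
  rw [card_pair hne] at h2
  refine ⟨X, hX, disjoint_iff_inter_eq_empty.2 (card_eq_zero.1 ?_), ?_⟩ <;> omega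

theorem false_of_forall_width_twist_eq {F : Finset (Finset α)} {e f : α} {k : ℕ}
    (hext : ∀ Z ∈ F, ∀ M ∈ F, #Z < #M → ∃ W ∈ F, Z ⊂ W) (h0 : ∅ ∈ F) (he : {e} ∈ F)
    (hf : {f} ∈ F) (hef : {e, f} ∉ F) (hk : ∀ A, width (twist F A) = k) : False := by
  have hne : e ≠ f := by
    rintro rfl
    exact hef (by simpa using he)
  have hw : ∀ A, width (twist F A) = width F := fun A => by rw [hk, ← hk ∅, twist_empty]
  obtain ⟨X, hX, hdisj, hXc⟩ := exists_disjoint_card_add_one_eq_maxCard hne h0 he hef (hw _)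
  obtain ⟨M, hM, hMc⟩ := exists_card_eq_maxCard ⟨_, h0⟩
  obtain ⟨Y, hY, hXY⟩ := hext X hX M hM (by omega)
  have hYc : #Y = maxCard F := le_antisymm (le_maxCard hY) (by have := card_lt_card hXY; omega)
  have hsub : {e, f} ∪ X ⊆ Y := union_subset
    (insert_subset (mem_of_card_eq_maxCard h0 he (hw _) hY hYc)
      (singleton_subset_iff.2 (mem_of_card_eq_maxCard h0 hf (hw _) hY hYc))) hXY.subset
  have hcard := card_le_card hsub
  rw [card_union_of_disjoint hdisj, card_pair hne] at hcard
  omega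

lemma isDeltaMatroid_pair (e : α) : IsDeltaMatroid {e} {∅, {e}} := by
  have hsub : ∀ X ∈ ({∅, {e}} : Finset (Finset α)), X ⊆ {e} := by simp
  refine ⟨⟨∅, mem_insert_self _ _⟩, hsub, fun X hX Y hY u hu => ⟨u, hu, ?_⟩⟩
  have hXY : X ∆ Y = {e} := (subset_singleton_iff.1 (symmDiff_subset_union.trans
    (union_subset (hsub X hX) (hsub Y hY)))).resolve_left (ne_empty_of_mem hu)
  have hue : u ∈ ({e} : Finset α) := hXY ▸ hu
  have hXu : X ∆ {u, u} = Y := by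
    rw [pair_eq_singleton u, mem_singleton.1 hue, ← hXY, symmDiff_symmDiff_cancel_left]
  rwa [hXu]

lemma IsDeltaMatroid.filter_notMem {E : Finset α} {F : Finset (Finset α)}
    (hF : IsDeltaMatroid E F) {e : α} (he : ∃ X ∈ F, e ∉ X) :
    IsDeltaMatroid (E.erase e) (F.filter (e ∉ ·)) := by
  obtain ⟨-, hsub, hexch⟩ := hF
  refine ⟨he.imp fun X hX => mem_filter.2 hX, fun X hX => ?_, fun X hX Y hY u hu => ?_⟩
  · rw [mem_filter] at hX
    exact subset_erase.2 ⟨hsub X hX.1, hX.2⟩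
  · rw [mem_filter] at hX hY
    obtain ⟨v, hv, hXuv⟩ := hexch X hX.1 Y hY.1 u hu
    have hXY : e ∉ X ∆ Y := fun h => (mem_union.1 (symmDiff_subset_union h)).elim hX.2 hY.2
    refine ⟨v, hv, mem_filter.2 ⟨hXuv, fun h => ?_⟩⟩
    rcases mem_symmDiff.1 h with ⟨h, -⟩ | ⟨h, -⟩
    · exact hX.2 h
    · rcases mem_insert.1 h with rfl | h
      · exact hXY hu
      · exact hXY (mem_singleton.1 h ▸ hv)

lemma eq_directSum_of_insert_mem_iff {F : Finset (Finset α)} {e : α}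
    (h : ∀ X, e ∉ X → (insert e X ∈ F ↔ X ∈ F)) :
    F = directSum {∅, {e}} (F.filter (e ∉ ·)) := by
  ext Z
  simp only [directSum, mem_image, mem_product, mem_insert, mem_singleton, mem_filter,
    Prod.exists]
  constructor
  · intro hZ
    by_cases heZ : e ∈ Z
    · refine ⟨{e}, Z.erase e, ⟨Or.inr rfl, ?_, notMem_erase e Z⟩, ?_⟩
      · rwa [← h _ (notMem_erase e Z), insert_erase heZ]
      · rw [← insert_eq, insert_erase heZ]
    · exact ⟨∅, Z, ⟨Or.inl rfl, hZ, heZ⟩, empty_union Z⟩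
  · rintro ⟨A, B, ⟨rfl | rfl, hB, heB⟩, rfl⟩
    · rwa [empty_union]
    · rwa [← insert_eq, h B heB]

lemma IsConnected.eq_singleton_of_insert_mem_iff {E : Finset α} {F : Finset (Finset α)}
    (hconn : IsConnected E F) (hF : IsDeltaMatroid E F) {e : α} (he : e ∈ E)
    (h : ∀ X, e ∉ X → (insert e X ∈ F ↔ X ∈ F)) : E = {e} := by
  by_contra hE
  have hrest : ∃ X ∈ F, e ∉ X := by
    obtain ⟨X, hX⟩ := hF.1
    by_cases heX : e ∈ X
    · exact ⟨X.erase e, by rwa [← h _ (notMem_erase e X), insert_erase heX], notMem_erase e X⟩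
    · exact ⟨X, hX, heX⟩
  apply hconn
  refine ⟨{e}, E.erase e, {∅, {e}}, F.filter (e ∉ ·), singleton_nonempty e, ?_, ?_, ?_, ?_, ?_, ?_⟩
  · rw [nonempty_iff_ne_empty, Ne, erase_eq_empty_iff, not_or]
    exact ⟨ne_empty_of_mem he, hE⟩
  · exact disjoint_singleton_left.2 (notMem_erase e E)
  · rw [← insert_eq, insert_erase he]
  · exact isDeltaMatroid_pair e
  · exact hF.filter_notMem hrest
  · exact eq_directSum_of_insert_mem_iff h

end SetSystem

section Binary

open Matrix

variable {C : Matrix ι ι (ZMod 2)}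

lemma mem_binaryFeasible {A : Finset ι} :
    A ∈ binaryFeasible C ↔ (C.submatrix ((↑) : A → ι) (↑)).det ≠ 0 := by
  simp [binaryFeasible]

lemma mem_binaryFeasible_iff_det_columnMix {A : Finset ι} :
    A ∈ binaryFeasible C ↔ (C.columnMix A).det ≠ 0 := by
  rw [mem_binaryFeasible, det_columnMix]

lemma empty_mem_binaryFeasible (C : Matrix ι ι (ZMod 2)) : ∅ ∈ binaryFeasible C := by
  simp [mem_binaryFeasible]

lemma singleton_mem_binaryFeasible {i : ι} : {i} ∈ binaryFeasible C ↔ C i i ≠ 0 := by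
  simp [mem_binaryFeasible, det_unique]

lemma pair_mem_binaryFeasible {i j : ι} (hij : i ≠ j) :
    {i, j} ∈ binaryFeasible C ↔ C i i * C j j - C i j * C j i ≠ 0 := by
  let f : Fin 2 → ({i, j} : Finset ι) := ![⟨i, by simp⟩, ⟨j, by simp⟩]
  have hf : Function.Bijective f := by
    rw [Fintype.bijective_iff_injective_and_card]
    refine ⟨fun a b h => ?_, by rw [Fintype.card_fin, Fintype.card_coe, card_pair hij]⟩
    fin_cases a <;> fin_cases b <;> simp_all [f, Subtype.ext_iff, hij.symm]
  rw [mem_binaryFeasible, ← det_submatrix_equiv_self (Equiv.ofBijective f hf), det_fin_two]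
  rfl

lemma binaryFeasible_eq_pair {e : ι} (huniv : (univ : Finset ι) = {e}) (hee : C e e ≠ 0) :
    binaryFeasible C = {∅, {e}} := by
  ext X
  refine ⟨fun _ => ?_, fun hX => ?_⟩
  · rw [mem_insert, mem_singleton, ← subset_singleton_iff, ← huniv]
    exact subset_univ X
  · rcases mem_insert.1 hX with rfl | hX
    · exact empty_mem_binaryFeasible C
    · rw [mem_singleton.1 hX]
      exact singleton_mem_binaryFeasible.2 hee

/-- Principal pivoting. With `K = C - 1` and `M = columnMix C B = K * diag(1_B) + 1`, the pivot is
`C' = M⁻¹ * K + 1`: then `M * columnMix C' Z = columnMix C (B ∆ Z)` for every `Z`. -/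
theorem exists_isSymm_binaryFeasible_eq_twist (hC : C.IsSymm) {B : Finset ι}
    (hB : B ∈ binaryFeasible C) :
    ∃ C' : Matrix ι ι (ZMod 2), C'.IsSymm ∧ binaryFeasible C' = twist (binaryFeasible C) B := by
  set K := C - 1 with hKdef
  set P := diagonal fun i => if i ∈ B then (1 : ZMod 2) else 0 with hPdef
  set M := K * P + 1 with hMdef
  have hMB : C.columnMix B = M := columnMix_eq_sub_one_mul_diagonal_add_one C B
  have hM : IsUnit M.det := by
    rw [← hMB]
    exact isUnit_iff_ne_zero.2 (mem_binaryFeasible_iff_det_columnMix.1 hB)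
  have hP : Pᵀ = P := diagonal_transpose _
  have hK : Kᵀ = K := by rw [hKdef, transpose_sub, transpose_one, hC.eq]
  clear_value M P K
  have hcomm : M * K = K * Mᵀ := by
    rw [hMdef, transpose_add, transpose_mul, hK, hP, transpose_one, add_mul, one_mul,
      Matrix.mul_add, Matrix.mul_one, Matrix.mul_assoc]
  have hMT : IsUnit Mᵀ.det := by rwa [det_transpose]
  refine ⟨M⁻¹ * K + 1, ?_, ?_⟩
  · have hinv : K * Mᵀ⁻¹ = M⁻¹ * K :=
      calc K * Mᵀ⁻¹ = M⁻¹ * (M * K) * Mᵀ⁻¹ := by rw [nonsing_inv_mul_cancel_left _ _ hM]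
        _ = M⁻¹ * K := by rw [hcomm, ← Matrix.mul_assoc, mul_nonsing_inv_cancel_right _ _ hMT]
    rw [IsSymm, transpose_add, transpose_mul, transpose_nonsing_inv, hK, hinv, transpose_one]
  · ext Z
    have hpivot : M * (M⁻¹ * K + 1).columnMix Z = C.columnMix (B ∆ Z) := by
      rw [columnMix_eq_sub_one_mul_diagonal_add_one, columnMix_eq_sub_one_mul_diagonal_add_one,
        diagonal_indicator_symmDiff, add_sub_cancel_right, Matrix.mul_add, Matrix.mul_one,
        Matrix.mul_assoc, mul_nonsing_inv_cancel_left _ _ hM, ← hKdef, ← hPdef, hMdef,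
        Matrix.mul_add]
      abel
    rw [mem_twist, mem_binaryFeasible_iff_det_columnMix, mem_binaryFeasible_iff_det_columnMix,
      ← hpivot, det_mul, Ne, Ne, hM.mul_right_eq_zero]

lemma apply_eq_zero_of_pair_notMem (hC : C.IsSymm) {z w : ι} (hz : {z} ∉ binaryFeasible C)
    (hzw : {z, w} ∉ binaryFeasible C) : C z w = 0 := by
  have hzz : C z z = 0 := by simpa [singleton_mem_binaryFeasible] using hz
  rcases eq_or_ne z w with rfl | hne
  · exact hzz
  · rw [pair_mem_binaryFeasible hne, hzz, zero_mul, zero_sub, neg_ne_zero, hC.apply z w,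
      not_not] at hzw
    exact mul_self_eq_zero.1 hzw

theorem isDeltaMatroid_binaryFeasible (hC : C.IsSymm) :
    IsDeltaMatroid univ (binaryFeasible C) := by
  refine ⟨⟨∅, empty_mem_binaryFeasible C⟩, fun X _ => subset_univ X, fun X hX Y hY u hu => ?_⟩
  obtain ⟨C', hC', hC'F⟩ := exists_isSymm_binaryFeasible_eq_twist hC hX
  have hpair : ∀ v, {u, v} ∈ binaryFeasible C' ↔ X ∆ {u, v} ∈ binaryFeasible C := by
    simp [hC'F, mem_twist]
  by_contra! h
  have hrow : ∀ v ∈ X ∆ Y, C' u v = 0 := fun v hv =>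
    apply_eq_zero_of_pair_notMem hC' (by rw [← pair_eq_singleton, hpair]; exact h u hu)
      (by rw [hpair]; exact h v hv)
  have hXY : X ∆ Y ∈ binaryFeasible C' := by
    rwa [hC'F, mem_twist, symmDiff_symmDiff_cancel_left]
  exact mem_binaryFeasible.1 hXY (det_eq_zero_of_row_eq_zero ⟨u, hu⟩ fun v => hrow v v.2)

theorem exists_ssuperset_mem_binaryFeasible (hC : C.IsSymm) {Z M : Finset ι}
    (hZ : Z ∈ binaryFeasible C) (hM : M ∈ binaryFeasible C) (hcard : #Z < #M) :
    ∃ W ∈ binaryFeasible C, Z ⊂ W := by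
  obtain ⟨C', hC', hC'F⟩ := exists_isSymm_binaryFeasible_eq_twist hC hZ
  by_contra! h
  have hpair : ∀ z w, z ∉ Z → w ∉ Z → {z, w} ∉ binaryFeasible C' := by
    intro z w hz hw hzw
    rw [hC'F, mem_twist, symmDiff_eq_union (by simp [hz, hw])] at hzw
    exact h _ hzw (ssubset_iff.2 ⟨z, hz, insert_subset (by simp) subset_union_left⟩)
  have hzero : ∀ z w, z ∉ Z → w ∉ Z → C' z w = 0 := fun z w hz hw =>
    apply_eq_zero_of_pair_notMem hC' (by simpa using hpair z z hz hz) (hpair z w hz hw)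
  have hZM : Z ∆ M ∈ binaryFeasible C' := by
    rwa [hC'F, mem_twist, symmDiff_symmDiff_cancel_left]
  -- the block of `C'[Z ∆ M]` on `M \ Z` vanishes and is more than half of it
  refine mem_binaryFeasible.1 hZM (det_eq_zero_of_zero_block _ ((M \ Z).subtype (· ∈ Z ∆ M))
    (fun i hi j hj => hzero _ _ (mem_sdiff.1 (mem_subtype.1 hi)).2
      (mem_sdiff.1 (mem_subtype.1 hj)).2) ?_)
  rw [Fintype.card_coe, card_subtype, filter_true_of_mem fun a ha => symmDiff_subset_sdiff' ha,
    card_symmDiff]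
  have h1 := card_sdiff_add_card_inter Z M
  have h2 := card_sdiff_add_card_inter M Z
  rw [inter_comm] at h2
  omega

lemma exists_apply_self_eq_one (hC : C.IsSymm) (hodd : ¬ IsEvenDM (binaryFeasible C)) :
    ∃ e, C e e = 1 := by
  by_contra! hdiag
  have heven : ∀ X ∈ binaryFeasible C, #X % 2 = 0 := fun X hX => by
    by_contra hX2
    refine mem_binaryFeasible.1 hX (det_eq_zero_of_isSymm_of_diag_eq_zero (hC.submatrix _)
      (fun i => ?_) ?_)
    · by_contra hi
      exact hdiag i (Fin.eq_one_of_ne_zero _ hi)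
    · rw [Fintype.card_coe, Nat.odd_iff]
      omega
  exact hodd fun X hX Y hY => by rw [heven X hX, heven Y hY]

lemma insert_mem_binaryFeasible_iff {e : ι} (hcol : ∀ i, C i e = (1 : Matrix ι ι (ZMod 2)) i e)
    {X : Finset ι} : insert e X ∈ binaryFeasible C ↔ X ∈ binaryFeasible C := by
  rw [mem_binaryFeasible_iff_det_columnMix, mem_binaryFeasible_iff_det_columnMix,
    columnMix_insert hcol]

lemma not_forall_width_twist_eq_of_pair_notMem (hC : C.IsSymm) {x y : ι}
    (hx : {x} ∈ binaryFeasible C) (hy : {y} ∈ binaryFeasible C)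
    (hxy : {x, y} ∉ binaryFeasible C) :
    ¬ ∃ k, ∀ A, width (twist (binaryFeasible C) A) = k := fun ⟨_, hk⟩ =>
  false_of_forall_width_twist_eq (fun _ hZ _ hM => exists_ssuperset_mem_binaryFeasible hC hZ hM)
    (empty_mem_binaryFeasible C) hx hy hxy hk

theorem not_forall_width_twist_eq_of_adj (hC : C.IsSymm) {e f : ι} (hne : e ≠ f)
    (hee : C e e = 1) (hef : C e f = 1) :
    ¬ ∃ k, ∀ A, width (twist (binaryFeasible C) A) = k := by
  have hfe : C f e = 1 := (hC.apply e f).trans hef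
  have he : {e} ∈ binaryFeasible C := singleton_mem_binaryFeasible.2 (by simp [hee])
  rcases eq_or_ne (C f f) 0 with hff | hff
  · -- pivoting on `{e}` turns the diagonal entry at `f` into `1`
    obtain ⟨C', hC', hC'F⟩ := exists_isSymm_binaryFeasible_eq_twist hC he
    rintro ⟨k, hk⟩
    refine not_forall_width_twist_eq_of_pair_notMem hC' (x := e) (y := f) ?_ ?_ ?_
      ⟨k, fun A => by rw [hC'F, twist_twist, hk]⟩
    · rw [hC'F, mem_twist, symmDiff_self]
      exact empty_mem_binaryFeasible C
    · rw [hC'F, mem_twist, symmDiff_eq_union (disjoint_singleton.2 hne), ← insert_eq,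
        pair_mem_binaryFeasible hne, hee, hff, hef, hfe]
      decide
    · rw [hC'F, mem_twist, symmDiff_of_le (by simp), insert_sdiff_of_mem _ (mem_singleton_self e),
        sdiff_eq_self_of_disjoint (disjoint_singleton.2 hne.symm), singleton_mem_binaryFeasible,
        hff, not_not]
  · refine not_forall_width_twist_eq_of_pair_notMem hC he (singleton_mem_binaryFeasible.2 hff) ?_
    rw [pair_mem_binaryFeasible hne, hee, Fin.eq_one_of_ne_zero _ hff, hef, hfe]
    decide

end Binary

/-- Let `D = D(C)` be a connected odd normal binary delta-matroid.  Its twist polynomial is a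
monomial iff the ground set is a single element `e` and the feasible sets are `{∅, {e}}`. -/
theorem connected_odd_monomial (C : Matrix ι ι (ZMod 2)) (hC : C.IsSymm)
    (hconn : IsConnected (Finset.univ : Finset ι) (binaryFeasible C))
    (hodd : ¬ IsEvenDM (binaryFeasible C)) :
    (∃ k : ℕ, ∀ A : Finset ι, width (twist (binaryFeasible C) A) = k) ↔
      ∃ e : ι, (Finset.univ : Finset ι) = {e} ∧
        binaryFeasible C = ({∅, {e}} : Finset (Finset ι)) := by
  constructor
  · intro hk
    obtain ⟨e, hee⟩ := exists_apply_self_eq_one hC hodd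
    by_cases hiso : ∀ f, f ≠ e → C f e = 0
    · have hcol : ∀ i, C i e = (1 : Matrix ι ι (ZMod 2)) i e := fun i => by
        rcases eq_or_ne i e with rfl | hie
        · rw [hee, Matrix.one_apply_eq]
        · rw [hiso i hie, Matrix.one_apply_ne hie]
      have huniv := hconn.eq_singleton_of_insert_mem_iff (isDeltaMatroid_binaryFeasible hC)
        (mem_univ e) fun X _ => insert_mem_binaryFeasible_iff hcol
      exact ⟨e, huniv, binaryFeasible_eq_pair huniv (by simp [hee])⟩
    · push Not at hiso
      obtain ⟨f, hfe, hf⟩ := hiso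
      exact absurd hk (not_forall_width_twist_eq_of_adj hC hfe.symm hee
        ((hC.apply f e).trans (Fin.eq_one_of_ne_zero _ hf)))
  · rintro ⟨e, huniv, hF⟩
    exact ⟨1, fun A => hF ▸ width_twist_pair (huniv ▸ subset_univ A)⟩

end DeltaMatroid

end
end

section
/- Let D=(E,𝓕) be a normal delta-matroid and e∈E an element with w(D)=w(D*e). If e is an orientable ribbon loop of D, then e is not a ribbon loop of the dual D*=D*E. -/
open Finset
open scoped symmDiff

noncomputable section

namespace DeltaMatroid

variable {α : Type*} [DecidableEq α]

variable {ι : Type*} [Fintype ι] [DecidableEq ι]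

/-- Let `D` be a normal delta-matroid and `e` an element with `w(D) = w(D * e)`.  If `e` is an
orientable ribbon loop of `D`, then `e` is not a ribbon loop of the dual `D* = D * E`. -/
theorem orientable_not_ribbonLoop_dual (E : Finset α) (F : Finset (Finset α))
    (hD : IsDeltaMatroid E F) (hnorm : ∅ ∈ F) (e : α) (he : e ∈ E)
    (hw : width F = width (twist F {e}))
    (horient : IsOrientableRibbonLoop F e) :
    ¬ IsRibbonLoop (twist F E) e := by
  obtain ⟨hne, hsub, _⟩ := hD
  -- minCard F = 0
  have hmin0 : minCard F = 0 := by
    apply Nat.sInf_eq_zero.mpr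
    exact Or.inl ⟨∅, by simpa using hnorm, by simp⟩
  -- {e} ∈ twist F {e}
  have hsing : ({e} : Finset α) ∈ twist F {e} := by
    refine Finset.mem_image.mpr ⟨∅, hnorm, ?_⟩
    simp
  -- From orientability, get a min-card set of twist F {e} containing e
  obtain ⟨hrl, hnotrl⟩ := horient
  rw [IsRibbonLoop] at hnotrl
  push_neg at hnotrl
  obtain ⟨Y, hYmin, heY⟩ := hnotrl
  rw [Fmin, Finset.mem_filter] at hYmin
  obtain ⟨hYtw, hYcard⟩ := hYmin
  have hY1 : 1 ≤ Y.card := Finset.card_pos.mpr ⟨e, heY⟩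
  have hminle : minCard (twist F {e}) ≤ 1 :=
    Nat.sInf_le ⟨{e}, by simpa using hsing, by simp⟩
  have hmintw : minCard (twist F {e}) = 1 := by omega
  -- maxCard (twist F {e}) = maxCard F + 1
  have hmaxtw_ge : 1 ≤ maxCard (twist F {e}) := by
    have h := Finset.le_sup (f := Finset.card) hsing
    rwa [Finset.card_singleton] at h
  have hwF : width F = maxCard F := by
    rw [width, hmin0]; omega
  have hwtw : width (twist F {e}) = maxCard (twist F {e}) - 1 := by
    rw [width, hmintw]
  have hmaxtw : maxCard (twist F {e}) = maxCard F + 1 := by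
    rw [hwF, hwtw] at hw
    omega
  -- get a feasible set of F of max card avoiding e
  have htwne : (twist F {e}).Nonempty := ⟨{e}, hsing⟩
  obtain ⟨X', hX'mem, hX'card⟩ :=
    Finset.exists_mem_eq_sup (twist F {e}) htwne Finset.card
  obtain ⟨X, hXF, hXeq⟩ := Finset.mem_image.mp hX'mem
  have hXle : X.card ≤ maxCard F := Finset.le_sup hXF
  have hX'c : X'.card = maxCard F + 1 := by
    rw [← hX'card]; exact hmaxtw
  have heX : e ∉ X := by
    intro heX
    have hxe : ({e} : Finset α) ∆ X = X.erase e := by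
      ext a
      simp only [Finset.mem_symmDiff, Finset.mem_singleton, Finset.mem_erase]
      constructor
      · rintro (⟨rfl, h⟩ | ⟨h1, h2⟩)
        · exact absurd heX h
        · exact ⟨h2, h1⟩
      · rintro ⟨h1, h2⟩; exact Or.inr ⟨h2, h1⟩
    rw [← hXeq, hxe] at hX'c
    have := Finset.card_erase_le (a := e) (s := X)
    omega
  have hXmax : X.card = maxCard F := by
    have hxe : ({e} : Finset α) ∆ X = insert e X := by
      ext a
      simp only [Finset.mem_symmDiff, Finset.mem_singleton, Finset.mem_insert]
      constructor
      · rintro (⟨rfl, _⟩ | ⟨h1, _⟩)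
        · exact Or.inl rfl
        · exact Or.inr h1
      · rintro (rfl | h)
        · exact Or.inl ⟨rfl, heX⟩
        · exact Or.inr ⟨h, fun hh => heX (hh ▸ h)⟩
    rw [← hXeq, hxe] at hX'c
    rw [Finset.card_insert_of_notMem heX] at hX'c
    omega
  -- now E ∆ X is a min-card feasible set of twist F E containing e
  have hXsubE : X ⊆ E := hsub X hXF
  have hEX : E ∆ X = E \ X := symmDiff_of_ge hXsubE
  have hY0mem : E ∆ X ∈ twist F E := Finset.mem_image.mpr ⟨X, hXF, rfl⟩
  have hY0card : (E ∆ X).card = E.card - maxCard F := by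
    rw [hEX, Finset.card_sdiff_of_subset hXsubE, hXmax]
  have hY0min : (E ∆ X).card = minCard (twist F E) := by
    apply le_antisymm
    · -- every member of twist F E has card ≥ E.card - maxCard F
      have hne' : (Finset.card '' ((twist F E : Set (Finset α)))).Nonempty :=
        ⟨(E ∆ X).card, E ∆ X, by simpa using hY0mem, rfl⟩
      have hmem := Nat.sInf_mem hne'
      obtain ⟨Z', hZ'mem, hZ'card⟩ := hmem
      have hZ'' : Z' ∈ twist F E := hZ'mem
      obtain ⟨Z, hZF, hZeq⟩ := Finset.mem_image.mp hZ''
      have hZsub : Z ⊆ E := hsub Z hZF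
      have : (E ∆ Z).card = E.card - Z.card := by
        rw [symmDiff_of_ge hZsub, Finset.card_sdiff_of_subset hZsub]
      have hZle : Z.card ≤ maxCard F := Finset.le_sup hZF
      have : E.card - maxCard F ≤ Z'.card := by
        rw [← hZeq, this]; omega
      rw [hY0card, minCard, ← hZ'card]
      exact this
    · exact Nat.sInf_le ⟨E ∆ X, by simpa using hY0mem, rfl⟩
  intro hcon
  apply hcon (E ∆ X) _ (by rw [hEX, Finset.mem_sdiff]; exact ⟨he, heX⟩)
  rw [Fmin, Finset.mem_filter]
  exact ⟨hY0mem, hY0min⟩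

end DeltaMatroid

end
end

section
/- Let D=(E,𝓕) be a normal delta-matroid and e∈E an element with w(D)=w(D*e). If e is a non-orientable ribbon loop of D, then e is a non-orientable ribbon loop of the dual D*=D*E. -/
open Finset
open scoped symmDiff

noncomputable section

namespace DeltaMatroid

variable {α : Type*} [DecidableEq α]

variable {ι : Type*} [Fintype ι] [DecidableEq ι]

private lemma singleton_symmDiff_of_mem {e : α} {X : Finset α} (h : e ∈ X) :
    ({e} : Finset α) ∆ X = X.erase e := by
  ext x; by_cases hx : x = e <;> simp [Finset.mem_symmDiff, hx, h]

private lemma singleton_symmDiff_of_not_mem {e : α} {X : Finset α} (h : e ∉ X) :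
    ({e} : Finset α) ∆ X = insert e X := by
  ext x; by_cases hx : x = e <;> simp [Finset.mem_symmDiff, hx, h]

private lemma symmDiff_of_subset {E X : Finset α} (h : X ⊆ E) : E ∆ X = E \ X := by
  ext x
  simp only [Finset.mem_symmDiff, Finset.mem_sdiff]
  constructor
  · rintro (h' | ⟨h1, h2⟩)
    · exact h'
    · exact absurd (h h1) h2
  · exact Or.inl

/-- Let `D` be a normal delta-matroid and `e` an element with `w(D) = w(D * e)`.  If `e` is a
non-orientable ribbon loop of `D`, then `e` is a non-orientable ribbon loop of the dual
`D* = D * E`. -/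
theorem nonorientable_ribbonLoop_dual (E : Finset α) (F : Finset (Finset α))
    (hD : IsDeltaMatroid E F) (hnorm : ∅ ∈ F) (e : α) (he : e ∈ E)
    (hw : width F = width (twist F {e}))
    (hnon : IsNonorientableRibbonLoop F e) :
    IsNonorientableRibbonLoop (twist F E) e := by
  classical
  obtain ⟨hFne, hsub, -⟩ := hD
  obtain ⟨-, hrl'⟩ := hnon
  -- Step 1 : {e} ∈ F
  have hsingleton_mem : ({e} : Finset α) ∈ twist F {e} := by
    refine Finset.mem_image.2 ⟨∅, hnorm, ?_⟩
    simp
  have hmin_le_one : minCard (twist F {e}) ≤ 1 :=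
    Nat.sInf_le ⟨{e}, by simpa using hsingleton_mem, Finset.card_singleton e⟩
  have heF : ({e} : Finset α) ∈ F := by
    rcases Nat.lt_or_ge (minCard (twist F {e})) 1 with h | h
    · have h0 : minCard (twist F {e}) = 0 := Nat.lt_one_iff.1 h
      have hmem : minCard (twist F {e}) ∈
          Finset.card '' ((twist F {e}) : Set (Finset α)) := by
        refine Nat.sInf_mem ?_
        exact ⟨1, {e}, by simpa using hsingleton_mem, Finset.card_singleton e⟩
      rw [h0] at hmem
      obtain ⟨Y, hY, hYc⟩ := hmem
      have hYe : Y = ∅ := Finset.card_eq_zero.1 hYc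
      obtain ⟨X, hX, hXY⟩ := Finset.mem_image.1 (Finset.mem_coe.1 hY)
      rw [hYe] at hXY
      have : ({e} : Finset α) = X := by
        have := symmDiff_eq_bot.1 (by simpa using hXY)
        exact this
      rw [this]; exact hX

    · have hmin1 : minCard (twist F {e}) = 1 := le_antisymm hmin_le_one h
      have : ({e} : Finset α) ∈ Fmin (twist F {e}) := by
        refine Finset.mem_filter.2 ⟨hsingleton_mem, ?_⟩
        simp [hmin1]
      exact absurd (hrl' _ this) (by simp)
  -- Step 2 : set up M0, M1
  set F0 := F.filter (fun X => e ∉ X) with hF0def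
  set F1 := F.filter (fun X => e ∈ X) with hF1def
  have h0mem : (∅ : Finset α) ∈ F0 := Finset.mem_filter.2 ⟨hnorm, by simp⟩
  have h1mem : ({e} : Finset α) ∈ F1 := Finset.mem_filter.2 ⟨heF, by simp⟩
  set M0 := F0.sup Finset.card with hM0def
  set M1 := F1.sup Finset.card with hM1def
  obtain ⟨X0, hX0, hX0c⟩ := Finset.exists_mem_eq_sup F0 ⟨∅, h0mem⟩ Finset.card
  obtain ⟨X1, hX1, hX1c⟩ := Finset.exists_mem_eq_sup F1 ⟨{e}, h1mem⟩ Finset.card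
  rw [← hM0def] at hX0c
  rw [← hM1def] at hX1c
  have hX0F : X0 ∈ F := (Finset.mem_filter.1 hX0).1
  have hX1F : X1 ∈ F := (Finset.mem_filter.1 hX1).1
  have hX0e : e ∉ X0 := (Finset.mem_filter.1 hX0).2
  have hX1e : e ∈ X1 := (Finset.mem_filter.1 hX1).2
  -- bounds on maxCard F
  have hm_le : maxCard F ≤ max M0 M1 := by
    refine Finset.sup_le fun X hX => ?_
    by_cases hx : e ∈ X
    · exact le_max_of_le_right (Finset.le_sup (Finset.mem_filter.2 ⟨hX, hx⟩))
    · exact le_max_of_le_left (Finset.le_sup (Finset.mem_filter.2 ⟨hX, hx⟩))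
  have hM0m : M0 ≤ maxCard F := by rw [hX0c]; exact Finset.le_sup hX0F
  have hM1m : M1 ≤ maxCard F := by rw [hX1c]; exact Finset.le_sup hX1F
  -- bounds on maxCard (twist F {e})
  have ht_le : maxCard (twist F {e}) ≤ max (M0 + 1) (M1 - 1) := by
    unfold maxCard twist
    rw [Finset.sup_image]
    refine Finset.sup_le fun X hX => ?_
    by_cases hx : e ∈ X
    · have : X.card ≤ M1 := Finset.le_sup (Finset.mem_filter.2 ⟨hX, hx⟩)
      refine le_max_of_le_right ?_
      simp only [Function.comp]
      rw [singleton_symmDiff_of_mem hx, Finset.card_erase_of_mem hx]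
      omega
    · have : X.card ≤ M0 := Finset.le_sup (Finset.mem_filter.2 ⟨hX, hx⟩)
      refine le_max_of_le_left ?_
      simp only [Function.comp]
      rw [singleton_symmDiff_of_not_mem hx, Finset.card_insert_of_notMem hx]
      omega
  have ht_ge : M0 + 1 ≤ maxCard (twist F {e}) := by
    have hmem : ({e} : Finset α) ∆ X0 ∈ twist F {e} :=
      Finset.mem_image.2 ⟨X0, hX0F, rfl⟩
    have := Finset.le_sup (f := Finset.card) hmem
    rwa [singleton_symmDiff_of_not_mem hX0e, Finset.card_insert_of_notMem hX0e, ← hX0c]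
      at this
  -- minCards are zero
  have hminF : minCard F = 0 :=
    Nat.le_zero.1 (Nat.sInf_le ⟨∅, by simpa using hnorm, Finset.card_empty⟩)
  have hmint : minCard (twist F {e}) = 0 := by
    have hmem : (∅ : Finset α) ∈ twist F {e} := by
      refine Finset.mem_image.2 ⟨{e}, heF, ?_⟩
      simp
    exact Nat.le_zero.1 (Nat.sInf_le ⟨∅, by simpa using hmem, Finset.card_empty⟩)
  have hw' : maxCard F = maxCard (twist F {e}) := by
    unfold width at hw
    rw [hminF, hmint] at hw
    simpa using hw
  -- key : M1 = M0 + 1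
  have key : M1 = M0 + 1 := by
    have h1 := le_max_iff.1 hm_le
    have h2 := le_max_iff.1 ht_le
    omega
  have hM1E : M1 ≤ E.card := by rw [hX1c]; exact Finset.card_le_card (hsub _ hX1F)
  constructor
  -- Part (a)
  · intro Y hY heY
    obtain ⟨hYmem, hYcard⟩ := Finset.mem_filter.1 hY
    obtain ⟨X, hX, rfl⟩ := Finset.mem_image.1 hYmem
    have hXE := hsub X hX
    have hEX : E ∆ X = E \ X := symmDiff_of_subset hXE
    have hx : e ∉ X := by
      rw [hEX] at heY
      exact (Finset.mem_sdiff.1 heY).2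
    have hZ : E ∆ X1 ∈ twist F E := Finset.mem_image.2 ⟨X1, hX1F, rfl⟩
    have hXM0 : X.card ≤ M0 := Finset.le_sup (Finset.mem_filter.2 ⟨hX, hx⟩)
    have hlt : (E ∆ X1).card < (E ∆ X).card := by
      rw [hEX, symmDiff_of_subset (hsub _ hX1F), Finset.card_sdiff_of_subset hXE,
        Finset.card_sdiff_of_subset (hsub _ hX1F)]
      omega
    have hmin_le : minCard (twist F E) ≤ (E ∆ X1).card :=
      Nat.sInf_le ⟨E ∆ X1, by simpa using hZ, rfl⟩
    rw [hYcard] at hlt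
    omega
  -- Part (b)
  · intro Y hY heY
    obtain ⟨hYmem, hYcard⟩ := Finset.mem_filter.1 hY
    obtain ⟨Y', hY', rfl⟩ := Finset.mem_image.1 hYmem
    obtain ⟨X, hX, rfl⟩ := Finset.mem_image.1 hY'
    have hXE := hsub X hX
    have hEX : E ∆ X = E \ X := symmDiff_of_subset hXE
    -- e in the set means e ∉ E ∆ X
    have hnx : e ∉ E ∆ X := by
      intro hmem
      rw [singleton_symmDiff_of_mem hmem] at heY
      exact (Finset.mem_erase.1 heY).1 rfl
    have hx : e ∈ X := by
      rw [hEX] at hnx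
      simp only [Finset.mem_sdiff, not_and, not_not] at hnx
      exact hnx he
    have hcardY : (({e} : Finset α) ∆ (E ∆ X)).card = E.card - X.card + 1 := by
      rw [singleton_symmDiff_of_not_mem hnx, Finset.card_insert_of_notMem hnx,
        hEX, Finset.card_sdiff_of_subset hXE]
    -- competitor from X0
    have hZmem : ({e} : Finset α) ∆ (E ∆ X0) ∈ twist (twist F E) {e} := by
      refine Finset.mem_image.2 ⟨E ∆ X0, Finset.mem_image.2 ⟨X0, hX0F, rfl⟩, rfl⟩
    have heEX0 : e ∈ E ∆ X0 := by
      rw [symmDiff_of_subset (hsub _ hX0F)]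
      exact Finset.mem_sdiff.2 ⟨he, hX0e⟩
    have hcardZ : (({e} : Finset α) ∆ (E ∆ X0)).card = E.card - X0.card - 1 := by
      rw [singleton_symmDiff_of_mem heEX0, Finset.card_erase_of_mem heEX0,
        symmDiff_of_subset (hsub _ hX0F), Finset.card_sdiff_of_subset (hsub _ hX0F)]
    have hXM1 : X.card ≤ M1 := Finset.le_sup (Finset.mem_filter.2 ⟨hX, hx⟩)
    have hmin_le : minCard (twist (twist F E) {e}) ≤ (({e} : Finset α) ∆ (E ∆ X0)).card :=
      Nat.sInf_le ⟨_, by simpa using hZmem, rfl⟩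
    rw [hcardY] at hYcard
    rw [hcardZ] at hmin_le
    omega

end DeltaMatroid

end
end

section
/- Let D=(E,𝓕) be a delta-matroid. Then the lower set system D_min=(E,𝓕_min) and the upper set system D_max=(E,𝓕_max) are matroids; that is, 𝓕_min and 𝓕_max each satisfy the basis exchange property: for all X,Y in the collection and u∈X∖Y there exists v∈Y∖X with (X∖{u})∪{v} in the collection. -/
open Finset
open scoped symmDiff

noncomputable section

namespace DeltaMatroid

variable {α : Type*}

/-! Symmetric exchange applied to minimum feasible sets `X, Y` at `u ∈ X \ Y` gives a feasible
`X ∆ {u, v}`; minimality forbids `v ∈ X`, so `v ∈ Y \ X` and `X - u + v` is again minimum.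
For maximum feasible sets the same argument only yields the reverse exchange `Y + u - v`.
Instead, the twist by `E` is a delta-matroid whose minimum feasible sets are the complements
in `E` of the maximum feasible sets of `F`, so `F_max` is the set of bases of the dual of the
matroid `D_min` of that twist. -/

lemma mem_Fmin_iff {F : Finset (Finset α)} {X : Finset α} :
    X ∈ Fmin F ↔ X ∈ F ∧ ∀ Y ∈ F, #X ≤ #Y := by
  rw [Fmin, mem_filter, minCard]
  refine and_congr_right fun hX => ⟨fun h Y hY => h ▸ Nat.sInf_le ⟨Y, hY, rfl⟩, fun h => ?_⟩
  symm
  refine IsLeast.csInf_eq ⟨⟨X, hX, rfl⟩, ?_⟩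
  rintro _ ⟨Y, hY, rfl⟩
  exact h Y hY

lemma mem_Fmax_iff {F : Finset (Finset α)} {X : Finset α} :
    X ∈ Fmax F ↔ X ∈ F ∧ ∀ Y ∈ F, #Y ≤ #X := by
  rw [Fmax, mem_filter, maxCard]
  exact and_congr_right fun hX =>
    ⟨fun h Y hY => h ▸ le_sup hY, fun h => le_antisymm (le_sup hX) (Finset.sup_le h)⟩

lemma Fmin_nonempty {F : Finset (Finset α)} (hF : F.Nonempty) : (Fmin F).Nonempty := by
  obtain ⟨X, hX, hmin⟩ := exists_min_image F card hF
  exact ⟨X, mem_Fmin_iff.2 ⟨hX, hmin⟩⟩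

variable [DecidableEq α]

def BasisExchange (𝓑 : Finset (Finset α)) : Prop :=
  ∀ X ∈ 𝓑, ∀ Y ∈ 𝓑, ∀ u ∈ X \ Y, ∃ v ∈ Y \ X, insert v (X.erase u) ∈ 𝓑

lemma symmDiff_pair_eq_insert_erase {X : Finset α} {u v : α} (hu : u ∈ X) (hv : v ∉ X) :
    X ∆ {u, v} = insert v (X.erase u) := by
  ext a
  simp only [mem_symmDiff, mem_insert, mem_singleton, mem_erase]
  grind

lemma card_insert_erase {X : Finset α} {u v : α} (hu : u ∈ X) (hv : v ∉ X) :
    #(insert v (X.erase u)) = #X := by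
  rw [card_insert_of_notMem fun h => hv (mem_of_mem_erase h), card_erase_add_one hu]

lemma twist_eq_image_sdiff {E : Finset α} {F : Finset (Finset α)} (hsub : ∀ Y ∈ F, Y ⊆ E) :
    twist F E = F.image (E \ ·) :=
  image_congr fun X hX => symmDiff_of_ge (hsub X hX)

lemma mem_Fmax_iff_sdiff_mem_Fmin_twist {E X : Finset α} {F : Finset (Finset α)}
    (hsub : ∀ Y ∈ F, Y ⊆ E) : X ∈ Fmax F ↔ X ⊆ E ∧ E \ X ∈ Fmin (twist F E) := by
  have card_compl {W : Finset α} (hW : W ⊆ E) : #(E \ W) + #W = #E := by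
    rw [card_sdiff_of_subset hW, Nat.sub_add_cancel (card_le_card hW)]
  simp only [mem_Fmax_iff, mem_Fmin_iff, twist_eq_image_sdiff hsub, mem_image,
    forall_exists_index, and_imp, forall_apply_eq_imp_iff₂]
  constructor
  · rintro ⟨hX, hmax⟩
    refine ⟨hsub X hX, ⟨X, hX, rfl⟩, fun W hW => ?_⟩
    have := hmax W hW
    have := card_compl (hsub X hX)
    have := card_compl (hsub W hW)
    omega
  · rintro ⟨hXE, ⟨W, hW, hWX⟩, hmin⟩
    obtain rfl : W = X := by
      rw [← Finset.sdiff_sdiff_eq_self (hsub W hW), hWX, Finset.sdiff_sdiff_eq_self hXE]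
    refine ⟨hW, fun V hV => ?_⟩
    have := hmin V hV
    have := card_compl hXE
    have := card_compl (hsub V hV)
    omega

def matroidOfBases (E : Finset α) (𝓑 : Finset (Finset α)) (hne : 𝓑.Nonempty)
    (hsub : ∀ B ∈ 𝓑, B ⊆ E) (hex : BasisExchange 𝓑) : Matroid α :=
  Matroid.ofIsBaseOfFinite E.finite_toSet (fun B => ∃ Z ∈ 𝓑, ↑Z = B)
    (let ⟨Z, hZ⟩ := hne; ⟨Z, Z, hZ, rfl⟩)
    (by
      rintro _ _ ⟨X, hX, rfl⟩ ⟨Y, hY, rfl⟩ u hu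
      obtain ⟨v, hv, hmem⟩ := hex X hX Y hY u (by simpa using hu)
      exact ⟨v, by simpa using hv, _, hmem, by simp⟩)
    (by rintro _ ⟨Z, hZ, rfl⟩; exact coe_subset.2 (hsub Z hZ))

section matroidOfBases

variable {E : Finset α} {𝓑 : Finset (Finset α)} {hne : 𝓑.Nonempty} {hsub : ∀ B ∈ 𝓑, B ⊆ E}
  {hex : BasisExchange 𝓑}

lemma matroidOfBases_E : (matroidOfBases E 𝓑 hne hsub hex).E = ↑E := rfl

lemma matroidOfBases_isBase_coe_iff {W : Finset α} :
    (matroidOfBases E 𝓑 hne hsub hex).IsBase ↑W ↔ W ∈ 𝓑 := by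
  change (∃ Z ∈ 𝓑, (Z : Set α) = W) ↔ W ∈ 𝓑
  simp only [coe_inj, exists_eq_right]

lemma matroidOfBases_dual_isBase_coe_iff {W : Finset α} :
    (matroidOfBases E 𝓑 hne hsub hex)✶.IsBase ↑W ↔ W ⊆ E ∧ E \ W ∈ 𝓑 := by
  rw [Matroid.dual_isBase_iff', matroidOfBases_E, ← coe_sdiff, matroidOfBases_isBase_coe_iff,
    coe_subset, and_comm]

end matroidOfBases

lemma basisExchange_of_isBase_coe_iff {𝓑 : Finset (Finset α)} (M : Matroid α)
    (h : ∀ W : Finset α, M.IsBase ↑W ↔ W ∈ 𝓑) : BasisExchange 𝓑 := by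
  intro X hX Y hY u hu
  obtain ⟨v, hv, hbase⟩ := ((h X).2 hX).exchange ((h Y).2 hY) (by simpa using hu)
  refine ⟨v, by simpa using hv, (h _).1 ?_⟩
  simpa using hbase

namespace IsDeltaMatroid

variable {E : Finset α} {F : Finset (Finset α)}

theorem twist_of_subset (hD : IsDeltaMatroid E F) {A : Finset α} (hA : A ⊆ E) :
    IsDeltaMatroid E (twist F A) := by
  obtain ⟨⟨X, hX⟩, hsub, hex⟩ := hD
  refine ⟨⟨A ∆ X, mem_image_of_mem _ hX⟩, ?_, ?_⟩
  · simp only [twist, mem_image, forall_exists_index, and_imp, forall_apply_eq_imp_iff₂]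
    exact fun X hX => symmDiff_le_sup.trans (sup_le hA (hsub X hX))
  · simp only [twist, mem_image, forall_exists_index, and_imp, forall_apply_eq_imp_iff₂]
    intro X hX Y hY u hu
    rw [symmDiff_symmDiff_symmDiff_comm, symmDiff_self, bot_symmDiff] at hu ⊢
    obtain ⟨v, hv, hXuv⟩ := hex X hX Y hY u hu
    exact ⟨v, hv, _, hXuv, (symmDiff_assoc _ _ _).symm⟩

theorem basisExchange_Fmin (hD : IsDeltaMatroid E F) : BasisExchange (Fmin F) := by
  intro X hX Y hY u hu
  rw [mem_Fmin_iff] at hX hY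
  obtain ⟨huX, huY⟩ := mem_sdiff.1 hu
  obtain ⟨v, hv, hXuv⟩ := hD.2.2 X hX.1 Y hY.1 u (mem_symmDiff.2 (Or.inl ⟨huX, huY⟩))
  have hvX : v ∉ X := by
    intro hvX
    have huv : {u, v} ⊆ X := insert_subset huX (singleton_subset_iff.2 hvX)
    have hlt := card_lt_card (sdiff_ssubset huv (insert_nonempty u {v}))
    rw [← symmDiff_of_ge huv] at hlt
    exact hlt.not_ge (hX.2 _ hXuv)
  have hvY : v ∈ Y := by simpa [mem_symmDiff, hvX] using hv
  rw [symmDiff_pair_eq_insert_erase huX hvX] at hXuv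
  refine ⟨v, mem_sdiff.2 ⟨hvY, hvX⟩, mem_Fmin_iff.2 ⟨hXuv, fun W hW => ?_⟩⟩
  rw [card_insert_erase huX hvX]
  exact hX.2 W hW

theorem basisExchange_Fmax (hD : IsDeltaMatroid E F) : BasisExchange (Fmax F) := by
  have hT := hD.twist_of_subset subset_rfl
  refine basisExchange_of_isBase_coe_iff
    (matroidOfBases E _ (Fmin_nonempty hT.1) (fun B hB => hT.2.1 B (filter_subset _ _ hB))
      hT.basisExchange_Fmin)✶ fun W => ?_
  rw [matroidOfBases_dual_isBase_coe_iff, mem_Fmax_iff_sdiff_mem_Fmin_twist hD.2.1]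

end IsDeltaMatroid

/-- The minimum- and maximum-cardinality feasible sets of a delta-matroid form the bases of
matroids (`D_min` and `D_max`): they satisfy the basis exchange property. -/
theorem lower_and_upper_matroid (E : Finset α) (F : Finset (Finset α))
    (hD : IsDeltaMatroid E F) :
    (∀ X ∈ Fmin F, ∀ Y ∈ Fmin F, ∀ u ∈ X \ Y, ∃ v ∈ Y \ X,
        insert v (X.erase u) ∈ Fmin F) ∧
    (∀ X ∈ Fmax F, ∀ Y ∈ Fmax F, ∀ u ∈ X \ Y, ∃ v ∈ Y \ X,
        insert v (X.erase u) ∈ Fmax F) :=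
  ⟨hD.basisExchange_Fmin, hD.basisExchange_Fmax⟩

end DeltaMatroid

end
end
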